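/- For every n ≥ 4, the graph K₂ + M_{n−2} contains no subgraph isomorphic to the disjoint union C₃ ∪̇ Θ₄ of a triangle and the graph Θ₄ (a 4-cycle with a chord). -/

import Mathlib

/-- `M t`: the matching on `t` vertices. -/
def matchingGraph (t : ℕ) : SimpleGraph (Fin t) :=
  SimpleGraph.fromRel (fun i j => (i : ℕ) / 2 = (j : ℕ) / 2)

/-- The join `G + H` of two graphs. -/
def joinGraph {α β : Type} (G : SimpleGraph α) (H : SimpleGraph β) :
    SimpleGraph (α ⊕ β) :=
  SimpleGraph.fromRel (fun x y =>
    match x, y with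
    | Sum.inl a, Sum.inl b => G.Adj a b
    | Sum.inr a, Sum.inr b => H.Adj a b
    | _, _ => True)

/-- Θ₄ : the 4-cycle 0-1-2-3-0 with the chord 0-2, i.e. K₄ minus the edge 1-3. -/
def theta4 : SimpleGraph (Fin 4) :=
  (SimpleGraph.completeGraph (Fin 4)).deleteEdges {s(1, 3)}

/-- C₃ ∪̇ Θ₄ : the vertex-disjoint union of a triangle and Θ₄. -/
def c3Theta4 : SimpleGraph (Fin 3 ⊕ Fin 4) :=
  SimpleGraph.fromRel (fun x y =>
    match x, y with
    | Sum.inl a, Sum.inl b => a ≠ b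
    | Sum.inr a, Sum.inr b => theta4.Adj a b
    | _, _ => False)

/-- `G` contains `H` as a subgraph: there is an injective graph homomorphism H → G. -/
def Contains {V W : Type} (G : SimpleGraph V) (H : SimpleGraph W) : Prop :=
  ∃ φ : H →g G, Function.Injective φ

/-!
Call a set of vertices a cherry transversal if it meets every path on three vertices. In an
embedding of a graph `F` into `K₂ + M`, the vertices sent to the `K₂` side form a cherry
transversal with at most two elements, since the matching `M` contains no path on three
vertices. But a cherry transversal of `C₃ ∪̇ Θ₄` needs a vertex of the triangle and two
vertices of `Θ₄`: a single vertex of `Θ₄` always leaves a path on the other three.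
-/

open SimpleGraph Function

lemma matchingGraph_eq_of_adj_of_adj {t : ℕ} {a b c : Fin t} (hab : (matchingGraph t).Adj a b)
    (hbc : (matchingGraph t).Adj b c) : a = c := by
  simp only [matchingGraph, fromRel_adj, ne_eq] at hab hbc
  omega

@[simp]
lemma joinGraph_adj_inr_inr {α β : Type} {G : SimpleGraph α} {H : SimpleGraph β} {a b : β} :
    (joinGraph G H).Adj (Sum.inr a) (Sum.inr b) ↔ H.Adj a b := by
  simp only [joinGraph, fromRel_adj, ne_eq, Sum.inr.injEq]
  exact ⟨fun h => h.2.elim id (·.symm), fun h => ⟨h.ne, .inl h⟩⟩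

@[simp]
lemma c3Theta4_adj_inl_inl {a b : Fin 3} : c3Theta4.Adj (Sum.inl a) (Sum.inl b) ↔ a ≠ b := by
  simp only [c3Theta4, fromRel_adj, ne_eq, Sum.inl.injEq]
  tauto

@[simp]
lemma c3Theta4_adj_inr_inr {a b : Fin 4} :
    c3Theta4.Adj (Sum.inr a) (Sum.inr b) ↔ theta4.Adj a b := by
  simp only [c3Theta4, fromRel_adj, ne_eq, Sum.inr.injEq]
  exact ⟨fun h => h.2.elim id (·.symm), fun h => ⟨h.ne, .inl h⟩⟩

lemma theta4_adj_add_one (i : Fin 4) : theta4.Adj i (i + 1) := by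
  fin_cases i <;> simp [theta4]

def MeetsAllCherries {V : Type} (F : SimpleGraph V) (S : Set V) : Prop :=
  ∀ x y z, F.Adj x y → F.Adj y z → x ≠ z → x ∈ S ∨ y ∈ S ∨ z ∈ S

lemma meetsAllCherries_preimage_range_inl {V α β : Type} {F : SimpleGraph V}
    {G : SimpleGraph α} {H : SimpleGraph β}
    (hH : ∀ a b c, H.Adj a b → H.Adj b c → a = c) (φ : F →g joinGraph G H)
    (hφ : Injective φ) : MeetsAllCherries F (φ ⁻¹' Set.range Sum.inl) := by
  have hright : ∀ v, v ∉ φ ⁻¹' Set.range Sum.inl → ∃ b, φ v = Sum.inr b := by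
    intro v hv
    cases h : φ v with
    | inl a => exact absurd ⟨a, h.symm⟩ hv
    | inr b => exact ⟨b, rfl⟩
  intro x y z hxy hyz hxz
  by_contra! hS
  obtain ⟨a, ha⟩ := hright x hS.1
  obtain ⟨b, hb⟩ := hright y hS.2.1
  obtain ⟨c, hc⟩ := hright z hS.2.2
  have hab : H.Adj a b := by simpa [ha, hb] using φ.map_adj hxy
  have hbc : H.Adj b c := by simpa [hb, hc] using φ.map_adj hyz
  exact hxz (hφ (by rw [ha, hc, hH a b c hab hbc]))

lemma ncard_preimage_range_inl_le {V α β : Type} [Finite α] {f : V → α ⊕ β}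
    (hf : Injective f) : (f ⁻¹' Set.range Sum.inl).ncard ≤ Nat.card α := by
  rw [← Set.ncard_range_of_injective Sum.inl_injective]
  exact Set.ncard_le_ncard_of_injOn f (fun _ hv => hv) hf.injOn

namespace MeetsAllCherries

variable {S : Set (Fin 3 ⊕ Fin 4)} (hS : MeetsAllCherries c3Theta4 S)
include hS

lemma exists_inl_mem : ∃ i, Sum.inl i ∈ S := by
  rcases hS (.inl 0) (.inl 1) (.inl 2) (by simp) (by simp) (by simp) with h | h | h <;>
    exact ⟨_, h⟩

lemma exists_inr_mem_inr_mem : ∃ a b, a ≠ b ∧ Sum.inr a ∈ S ∧ Sum.inr b ∈ S := by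
  have cherry : ∀ a b c : Fin 4, theta4.Adj a b → theta4.Adj b c → a ≠ c →
      Sum.inr a ∈ S ∨ Sum.inr b ∈ S ∨ Sum.inr c ∈ S := fun a b c hab hbc hac =>
    hS _ _ _ (c3Theta4_adj_inr_inr.2 hab) (c3Theta4_adj_inr_inr.2 hbc) (by simpa using hac)
  by_cases h0 : Sum.inr 0 ∈ S
  · rcases cherry 1 2 3 (theta4_adj_add_one 1) (theta4_adj_add_one 2) (by decide)
      with h | h | h <;> exact ⟨0, _, by decide, h0, h⟩
  by_cases h2 : Sum.inr 2 ∈ S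
  · rcases cherry 3 0 1 (theta4_adj_add_one 3) (theta4_adj_add_one 0) (by decide)
      with h | h | h <;> exact ⟨2, _, by decide, h2, h⟩
  have h1 : Sum.inr 1 ∈ S := by
    simpa [h0, h2] using cherry 0 1 2 (theta4_adj_add_one 0) (theta4_adj_add_one 1) (by decide)
  have h3 : Sum.inr 3 ∈ S := by
    simpa [h0, h2] using cherry 2 3 0 (theta4_adj_add_one 2) (theta4_adj_add_one 3) (by decide)
  exact ⟨1, 3, by decide, h1, h3⟩

lemma three_le_ncard : 3 ≤ S.ncard := by
  obtain ⟨i, hi⟩ := hS.exists_inl_mem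
  obtain ⟨a, b, hab, ha, hb⟩ := hS.exists_inr_mem_inr_mem
  calc 3 = ({.inl i, .inr a, .inr b} : Set (Fin 3 ⊕ Fin 4)).ncard :=
        (Set.ncard_eq_three.2 ⟨_, _, _, by simp, by simp, by simpa using hab, rfl⟩).symm
    _ ≤ S.ncard := Set.ncard_le_ncard (by simp [Set.insert_subset_iff, hi, ha, hb])

end MeetsAllCherries

theorem stmt3_general (n : ℕ) :
    ¬ Contains (joinGraph (SimpleGraph.completeGraph (Fin 2)) (matchingGraph (n - 2))) c3Theta4 := by
  rintro ⟨φ, hφ⟩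
  have hmeet := meetsAllCherries_preimage_range_inl
    (fun _ _ _ => matchingGraph_eq_of_adj_of_adj) φ hφ
  have hle := ncard_preimage_range_inl_le hφ
  rw [Nat.card_fin] at hle
  exact absurd hmeet.three_le_ncard (by omega)

/-- For every n ≥ 4, K₂ + M_{n−2} contains no subgraph isomorphic to
the disjoint union C₃ ∪̇ Θ₄. -/
theorem stmt3 (n : ℕ) (hn : 4 ≤ n) :
    ¬ Contains (joinGraph (SimpleGraph.completeGraph (Fin 2)) (matchingGraph (n - 2))) c3Theta4 :=
  stmt3_general n
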